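/- Upper bound on the stabilizing gain: for any K in the sublevel set 𝕂_α = {K : J(K) ≤ α}, one has ‖KC‖ ≤ (√(‖R‖α + ‖B‖² α²/μ))/(√μ · λ_min(R)) + ‖B‖‖A‖α/(μ λ_min(R)), where μ = σ_min(X₀) > 0 and ‖·‖ denotes the spectral norm. -/

import Mathlib

open Matrix Filter Topology

/-- Spectral radius of a real square matrix (max modulus of complex eigenvalues). -/
noncomputable def specRad {n : ℕ} (A : Matrix (Fin n) (Fin n) ℝ) : ℝ :=
  sSup ((fun z : ℂ => ‖z‖) '' spectrum ℂ (A.map (algebraMap ℝ ℂ)))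

/-- Spectral (ℓ²-operator) norm of a real matrix. -/
noncomputable def specNorm {m n : ℕ} (A : Matrix (Fin m) (Fin n) ℝ) : ℝ :=
  ‖LinearMap.toContinuousLinearMap (Matrix.toEuclideanLin A)‖

/-- Frobenius norm. -/
noncomputable def frobNorm {m n : ℕ} (A : Matrix (Fin m) (Fin n) ℝ) : ℝ :=
  Real.sqrt ((Aᵀ * A).trace)

/-- Least singular value of a real matrix. -/
noncomputable def sigmaMin {m n : ℕ} (A : Matrix (Fin m) (Fin n) ℝ) : ℝ :=
  sInf ((fun v : EuclideanSpace ℝ (Fin m) => ‖Matrix.toEuclideanLin Aᵀ v‖) '' {v | ‖v‖ = 1})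

/-- Least (real) eigenvalue, as infimum of the real spectrum. -/
noncomputable def lambdaMin {n : ℕ} (Q : Matrix (Fin n) (Fin n) ℝ) : ℝ :=
  sInf (spectrum ℝ Q)

section helpers

lemma real_conjT {m n : ℕ} (A : Matrix (Fin m) (Fin n) ℝ) : Aᴴ = Aᵀ :=
  conjTranspose_eq_transpose_of_trivial A

lemma psd_trace_nonneg {n : ℕ} {S : Matrix (Fin n) (Fin n) ℝ} (hS : S.PosSemidef) :
    0 ≤ S.trace := by
  rw [Matrix.trace]
  refine Finset.sum_nonneg fun i _ => ?_
  have := hS.dotProduct_mulVec_nonneg (Pi.single i 1)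
  simpa [Matrix.diag] using this

open scoped MatrixOrder in
lemma psd_trace_mul_nonneg {n : ℕ} {S T : Matrix (Fin n) (Fin n) ℝ}
    (hS : S.PosSemidef) (hT : T.PosSemidef) : 0 ≤ (S * T).trace := by
  have h : T = CFC.sqrt T * CFC.sqrt T := (CFC.sqrt_mul_sqrt_self T hT.nonneg).symm
  have h2 : (S * T).trace = (CFC.sqrt T * S * CFC.sqrt T).trace := by
    conv_lhs => rw [h]
    rw [← mul_assoc, Matrix.trace_mul_cycle]
  rw [h2]
  have h3 : (CFC.sqrt T * S * CFC.sqrt T).PosSemidef := by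
    have := hS.conjTranspose_mul_mul_same (CFC.sqrt T)
    rwa [(CFC.sqrt_nonneg T).posSemidef.1.eq] at this
  exact psd_trace_nonneg h3

lemma shift_psd {n : ℕ} {A : Matrix (Fin n) (Fin n) ℝ} (hA : A.IsHermitian)
    {c : ℝ} (hc : ∀ i, c ≤ hA.eigenvalues i) : (A - c • 1).PosSemidef := by
  have hU : (hA.eigenvectorUnitary : Matrix (Fin n) (Fin n) ℝ) *
      star (hA.eigenvectorUnitary : Matrix (Fin n) (Fin n) ℝ) = 1 :=
    Matrix.mem_unitaryGroup_iff.mp hA.eigenvectorUnitary.2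
  have key : A - c • 1 = (hA.eigenvectorUnitary : Matrix (Fin n) (Fin n) ℝ) *
      Matrix.diagonal (fun i => hA.eigenvalues i - c) *
      star (hA.eigenvectorUnitary : Matrix (Fin n) (Fin n) ℝ) := by
    have hd : Matrix.diagonal (fun i => hA.eigenvalues i - c) =
        Matrix.diagonal (RCLike.ofReal ∘ hA.eigenvalues) - c • 1 := by
      ext i j
      by_cases h : i = j <;> simp [Matrix.diagonal, Matrix.one_apply, h]
    rw [hd, Matrix.mul_sub, Matrix.sub_mul]
    conv_lhs => rw [hA.spectral_theorem, Unitary.conjStarAlgAut_apply]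
    congr 1
    rw [Matrix.mul_smul, Matrix.smul_mul, mul_one, hU]
  rw [key]
  have := (Matrix.posSemidef_diagonal_iff.mpr fun i => sub_nonneg.mpr (hc i)).mul_mul_conjTranspose_same
    (hA.eigenvectorUnitary : Matrix (Fin n) (Fin n) ℝ)
  rwa [← Matrix.star_eq_conjTranspose] at this

lemma specNorm_nonneg {m n : ℕ} (A : Matrix (Fin m) (Fin n) ℝ) : 0 ≤ specNorm A :=
  norm_nonneg _

lemma trace_transpose_mul_self {m n : ℕ} (L : Matrix (Fin m) (Fin n) ℝ) :
    (Lᵀ * L).trace = ∑ i : Fin m, ∑ j : Fin n, (L i j) ^ 2 := by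
  rw [Matrix.trace]
  rw [Finset.sum_comm]
  congr 1
  ext j
  simp [Matrix.diag, Matrix.mul_apply, sq]

lemma trace_transpose_mul_self_nonneg {m n : ℕ} (L : Matrix (Fin m) (Fin n) ℝ) :
    0 ≤ (Lᵀ * L).trace := by
  rw [trace_transpose_mul_self]
  positivity

lemma norm_toEuclideanLin_sq {m n : ℕ} (L : Matrix (Fin m) (Fin n) ℝ)
    (v : EuclideanSpace ℝ (Fin n)) :
    ‖Matrix.toEuclideanLin L v‖ ^ 2 ≤ (Lᵀ * L).trace * ‖v‖ ^ 2 := by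
  have hv : ‖v‖ ^ 2 = ∑ j : Fin n, (v j) ^ 2 := by
    rw [EuclideanSpace.norm_eq, Real.sq_sqrt (by positivity)]
    simp [sq_abs]
  have hfv : ‖Matrix.toEuclideanLin L v‖ ^ 2 = ∑ i : Fin m, (∑ j : Fin n, L i j * v j) ^ 2 := by
    rw [EuclideanSpace.norm_eq, Real.sq_sqrt (by positivity)]
    congr 1
    ext i
    rw [Real.norm_eq_abs, sq_abs]
    congr 1
  rw [hfv, hv, trace_transpose_mul_self, Finset.sum_mul]
  refine Finset.sum_le_sum fun i _ => ?_
  exact Finset.sum_mul_sq_le_sq_mul_sq _ _ _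

lemma specNorm_sq_le_trace {m n : ℕ} (L : Matrix (Fin m) (Fin n) ℝ) :
    specNorm L ^ 2 ≤ (Lᵀ * L).trace := by
  have hb : specNorm L ≤ Real.sqrt ((Lᵀ * L).trace) := by
    refine ContinuousLinearMap.opNorm_le_bound _ (Real.sqrt_nonneg _) fun v => ?_
    have h := norm_toEuclideanLin_sq L v
    have : ‖Matrix.toEuclideanLin L v‖ ≤ Real.sqrt ((Lᵀ * L).trace * ‖v‖ ^ 2) := by
      rw [← Real.sqrt_sq (norm_nonneg (Matrix.toEuclideanLin L v))]
      exact Real.sqrt_le_sqrt h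
    rwa [Real.sqrt_mul (trace_transpose_mul_self_nonneg L), Real.sqrt_sq (norm_nonneg v)] at this
  calc specNorm L ^ 2 ≤ Real.sqrt ((Lᵀ * L).trace) ^ 2 :=
        pow_le_pow_left₀ (specNorm_nonneg L) hb 2
    _ = (Lᵀ * L).trace := Real.sq_sqrt (trace_transpose_mul_self_nonneg L)

lemma toEuclideanLin_eigen {n : ℕ} {A : Matrix (Fin n) (Fin n) ℝ} (hA : A.IsHermitian)
    (i : Fin n) :
    Matrix.toEuclideanLin A (hA.eigenvectorBasis i) = hA.eigenvalues i • hA.eigenvectorBasis i := by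
  ext j
  have h := congrFun (hA.mulVec_eigenvectorBasis i) j
  simpa [Matrix.toEuclideanLin_apply] using h

lemma norm_toEuclideanLin_eigen {n : ℕ} {A : Matrix (Fin n) (Fin n) ℝ} (hA : A.IsHermitian)
    (i : Fin n) :
    ‖Matrix.toEuclideanLin A (hA.eigenvectorBasis i)‖ = |hA.eigenvalues i| := by
  rw [toEuclideanLin_eigen hA i, norm_smul, hA.eigenvectorBasis.orthonormal.1 i]
  simp [Real.norm_eq_abs]

end helpers

/-- Upper bound on the stabilizing gain on a sublevel set: for `K` with `J(K) ≤ α`,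
`‖KC‖ ≤ √(‖R‖α + ‖B‖²α²/μ)/(√μ λ_min(R)) + ‖B‖‖A‖α/(μ λ_min(R))`, `μ = σ_min(X₀)`. -/
theorem gain_upper_bound {n m d : ℕ}
    (A : Matrix (Fin n) (Fin n) ℝ) (B : Matrix (Fin n) (Fin m) ℝ)
    (C : Matrix (Fin d) (Fin n) ℝ) (K : Matrix (Fin m) (Fin d) ℝ)
    (Q X₀ P : Matrix (Fin n) (Fin n) ℝ) (R : Matrix (Fin m) (Fin m) ℝ)
    (hQ : Q.PosDef) (hR : R.PosDef) (hX₀ : X₀.PosDef)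
    (hstab : specRad (A - B * K * C) < 1)
    (hPpos : P.PosDef)
    (hP : P = Q + Cᵀ * Kᵀ * R * K * C + (A - B * K * C)ᵀ * P * (A - B * K * C))
    (α : ℝ) (hα : (P * X₀).trace ≤ α) :
    specNorm (K * C) ≤
      Real.sqrt (specNorm R * α + specNorm B ^ 2 * α ^ 2 / sigmaMin X₀) /
        (Real.sqrt (sigmaMin X₀) * lambdaMin R) +
      specNorm B * specNorm A * α / (sigmaMin X₀ * lambdaMin R) := by
  set μ := sigmaMin X₀ with hμdef
  set lam := lambdaMin R with hlamdef
  have hα0 : 0 ≤ α :=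
    le_trans (psd_trace_mul_nonneg hPpos.posSemidef hX₀.posSemidef) hα
  have hμ0 : 0 ≤ μ := by
    refine Real.sInf_nonneg fun x hx => ?_
    obtain ⟨v, -, rfl⟩ := hx
    exact norm_nonneg _
  have hspecR : spectrum ℝ R = Set.range hR.1.eigenvalues :=
    Matrix.IsHermitian.spectrum_real_eq_range_eigenvalues hR.1
  have hlam0 : 0 ≤ lam := by
    rw [hlamdef, lambdaMin, hspecR]
    refine Real.sInf_nonneg fun x hx => ?_
    obtain ⟨i, rfl⟩ := hx
    exact hR.posSemidef.eigenvalues_nonneg i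
  have hRHS0 : 0 ≤
      Real.sqrt (specNorm R * α + specNorm B ^ 2 * α ^ 2 / μ) /
        (Real.sqrt μ * lam) + specNorm B * specNorm A * α / (μ * lam) :=
    add_nonneg
      (div_nonneg (Real.sqrt_nonneg _) (mul_nonneg (Real.sqrt_nonneg _) hlam0))
      (div_nonneg (mul_nonneg (mul_nonneg (specNorm_nonneg _) (specNorm_nonneg _)) hα0)
        (mul_nonneg hμ0 hlam0))
  rcases Nat.eq_zero_or_pos m with hm | hm
  · subst hm
    have hL : K * C = 0 := Subsingleton.elim _ _
    rw [hL]
    have h0 : specNorm (0 : Matrix (Fin 0) (Fin n) ℝ) = 0 := by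
      simp [specNorm]
    rw [h0]
    exact hRHS0
  rcases Nat.eq_zero_or_pos n with hn | hn
  · subst hn
    have hL : K * C = 0 := Subsingleton.elim _ _
    rw [hL]
    have h0 : specNorm (0 : Matrix (Fin m) (Fin 0) ℝ) = 0 := by
      simp [specNorm]
    rw [h0]
    exact hRHS0
  -- main case
  have hX₀H : X₀.IsHermitian := hX₀.1
  have hTX : X₀ᵀ = X₀ := by rw [← real_conjT X₀]; exact hX₀H
  -- μ ≤ every eigenvalue of X₀
  have hbddX : BddBelow ((fun v : EuclideanSpace ℝ (Fin n) =>
      ‖Matrix.toEuclideanLin X₀ᵀ v‖) '' {v | ‖v‖ = 1}) := by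
    refine ⟨0, fun x hx => ?_⟩
    obtain ⟨v, -, rfl⟩ := hx
    exact norm_nonneg _
  have hμ_le : ∀ i, μ ≤ hX₀H.eigenvalues i := by
    intro i
    have hmem : ‖Matrix.toEuclideanLin X₀ᵀ (hX₀H.eigenvectorBasis i)‖ ∈
        ((fun v : EuclideanSpace ℝ (Fin n) => ‖Matrix.toEuclideanLin X₀ᵀ v‖) '' {v | ‖v‖ = 1}) :=
      ⟨hX₀H.eigenvectorBasis i, hX₀H.eigenvectorBasis.orthonormal.1 i, rfl⟩
    have hval : ‖Matrix.toEuclideanLin X₀ᵀ (hX₀H.eigenvectorBasis i)‖ = hX₀H.eigenvalues i := by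
      rw [hTX, norm_toEuclideanLin_eigen hX₀H i, abs_of_pos (hX₀.eigenvalues_pos i)]
    have h := csInf_le hbddX hmem
    rw [hval] at h
    exact h
  have hshiftX : (X₀ - μ • 1).PosSemidef := shift_psd hX₀H hμ_le
  -- μ > 0
  have hμpos : 0 < μ := by
    obtain ⟨i₀, -, hi₀⟩ := Finset.exists_min_image Finset.univ hX₀H.eigenvalues
      ⟨⟨0, hn⟩, Finset.mem_univ _⟩
    set c₀ := hX₀H.eigenvalues i₀ with hc₀
    have hc₀pos : 0 < c₀ := hX₀.eigenvalues_pos i₀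
    have hshift : (X₀ - c₀ • 1).PosSemidef :=
      shift_psd hX₀H fun i => hi₀ i (Finset.mem_univ i)
    have hlb : ∀ x ∈ ((fun v : EuclideanSpace ℝ (Fin n) =>
        ‖Matrix.toEuclideanLin X₀ᵀ v‖) '' {v | ‖v‖ = 1}), c₀ ≤ x := by
      rintro x ⟨v, hv, rfl⟩
      have hv1 : ‖v‖ = 1 := hv
      have hdot : (⇑v : Fin n → ℝ) ⬝ᵥ ((X₀ - c₀ • 1) *ᵥ ⇑v) ≥ 0 := by
        have := hshift.dotProduct_mulVec_nonneg (⇑v)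
        simpa using this
      have hvv : (⇑v : Fin n → ℝ) ⬝ᵥ ⇑v = 1 := by
        have : ‖v‖ ^ 2 = 1 := by rw [hv1]; norm_num
        rw [EuclideanSpace.norm_eq, Real.sq_sqrt (by positivity)] at this
        simpa [dotProduct, sq_abs, sq] using this
      have hexp : (⇑v : Fin n → ℝ) ⬝ᵥ ((X₀ - c₀ • 1) *ᵥ ⇑v)
          = (⇑v : Fin n → ℝ) ⬝ᵥ (X₀ *ᵥ ⇑v) - c₀ := by
        rw [Matrix.sub_mulVec, dotProduct_sub]
        congr 1
        rw [Matrix.smul_mulVec, Matrix.one_mulVec, dotProduct_smul]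
        rw [smul_eq_mul, hvv, mul_one]
      have h1 : c₀ ≤ (⇑v : Fin n → ℝ) ⬝ᵥ (X₀ *ᵥ ⇑v) := by
        rw [hexp] at hdot; linarith
      have h2 : (⇑v : Fin n → ℝ) ⬝ᵥ (X₀ *ᵥ ⇑v)
          ≤ ‖Matrix.toEuclideanLin X₀ᵀ v‖ := by
        have hinner : inner ℝ v (Matrix.toEuclideanLin X₀ v)
            = (⇑v : Fin n → ℝ) ⬝ᵥ (X₀ *ᵥ ⇑v) := by
          simp [PiLp.inner_apply, Matrix.toEuclideanLin_apply, dotProduct,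
            RCLike.inner_apply, mul_comm]
        calc (⇑v : Fin n → ℝ) ⬝ᵥ (X₀ *ᵥ ⇑v) = inner ℝ v (Matrix.toEuclideanLin X₀ v) :=
              hinner.symm
          _ ≤ ‖v‖ * ‖Matrix.toEuclideanLin X₀ v‖ := real_inner_le_norm _ _
          _ = ‖Matrix.toEuclideanLin X₀ᵀ v‖ := by rw [hv1, one_mul, hTX]
      linarith
    have hne : ((fun v : EuclideanSpace ℝ (Fin n) =>
        ‖Matrix.toEuclideanLin X₀ᵀ v‖) '' {v | ‖v‖ = 1}).Nonempty :=
      ⟨_, ⟨hX₀H.eigenvectorBasis ⟨0, hn⟩,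
        hX₀H.eigenvectorBasis.orthonormal.1 _, rfl⟩⟩
    exact lt_of_lt_of_le hc₀pos (le_csInf hne hlb)
  -- lam facts
  have hbddR : BddBelow (Set.range hR.1.eigenvalues) :=
    (Set.finite_range _).bddBelow
  have hlam_le : ∀ i, lam ≤ hR.1.eigenvalues i := by
    intro i
    rw [hlamdef, lambdaMin, hspecR]
    exact csInf_le hbddR ⟨i, rfl⟩
  have hshiftR : (R - lam • 1).PosSemidef := shift_psd hR.1 hlam_le
  have hlampos : 0 < lam := by
    obtain ⟨i₁, -, hi₁⟩ := Finset.exists_min_image Finset.univ hR.1.eigenvalues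
      ⟨⟨0, hm⟩, Finset.mem_univ _⟩
    have : 0 < hR.1.eigenvalues i₁ := hR.eigenvalues_pos i₁
    rw [hlamdef, lambdaMin, hspecR]
    refine lt_of_lt_of_le this (le_csInf ⟨_, ⟨i₁, rfl⟩⟩ ?_)
    rintro x ⟨i, rfl⟩
    exact hi₁ i (Finset.mem_univ i)
  have hlam_norm : lam ≤ specNorm R := by
    have h1 := hlam_le ⟨0, hm⟩
    have h2 : |hR.1.eigenvalues ⟨0, hm⟩| ≤ specNorm R := by
      rw [← norm_toEuclideanLin_eigen hR.1 ⟨0, hm⟩]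
      have := (LinearMap.toContinuousLinearMap (Matrix.toEuclideanLin R)).le_opNorm
        (hR.1.eigenvectorBasis ⟨0, hm⟩)
      rwa [hR.1.eigenvectorBasis.orthonormal.1, mul_one] at this
    exact h1.trans ((le_abs_self _).trans h2)
  -- trace chain
  set L := K * C with hLdef
  set S := Lᵀ * R * L with hSdef
  have hSrw : Cᵀ * Kᵀ * R * K * C = S := by
    rw [hSdef, hLdef, Matrix.transpose_mul]
    simp only [Matrix.mul_assoc]
  have hS_psd : S.PosSemidef := by
    have := hR.posSemidef.conjTranspose_mul_mul_same L
    rwa [real_conjT] at this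
  have hPS : (P - S).PosSemidef := by
    have hps : P - S = Q + (A - B * K * C)ᵀ * P * (A - B * K * C) := by
      rw [sub_eq_iff_eq_add]
      conv_lhs => rw [hP, hSrw]
      abel
    rw [hps]
    refine Matrix.PosSemidef.add hQ.posSemidef ?_
    have := hPpos.posSemidef.conjTranspose_mul_mul_same (A - B * K * C)
    rwa [real_conjT] at this
  have hSX : (S * X₀).trace ≤ α := by
    have h := psd_trace_mul_nonneg hPS hX₀.posSemidef
    rw [Matrix.sub_mul, Matrix.trace_sub] at h
    linarith
  have hμS : μ * S.trace ≤ (S * X₀).trace := by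
    have h := psd_trace_mul_nonneg hS_psd hshiftX
    rw [Matrix.mul_sub, Matrix.trace_sub, mul_smul_comm, mul_one, Matrix.trace_smul,
      smul_eq_mul] at h
    linarith
  have hlamL : lam * (Lᵀ * L).trace ≤ S.trace := by
    have hpsd : (Lᵀ * (R - lam • 1) * L).PosSemidef := by
      have := hshiftR.conjTranspose_mul_mul_same L
      rwa [real_conjT] at this
    have h := psd_trace_nonneg hpsd
    have hexp : Lᵀ * (R - lam • 1) * L = S - lam • (Lᵀ * L) := by
      rw [hSdef, Matrix.mul_sub, Matrix.sub_mul]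
      congr 1
      rw [Matrix.mul_smul, Matrix.smul_mul, Matrix.mul_one]
    rw [hexp, Matrix.trace_sub, Matrix.trace_smul, smul_eq_mul] at h
    linarith
  have hStr0 : 0 ≤ S.trace := psd_trace_nonneg hS_psd
  have hLL : (Lᵀ * L).trace ≤ α / (μ * lam) := by
    rw [le_div_iff₀ (mul_pos hμpos hlampos)]
    have h1 : μ * S.trace ≤ α := le_trans hμS hSX
    calc (Lᵀ * L).trace * (μ * lam) = μ * (lam * (Lᵀ * L).trace) := by ring
      _ ≤ μ * S.trace := mul_le_mul_of_nonneg_left hlamL hμ0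
      _ ≤ α := h1
  have hKC2 : specNorm L ^ 2 ≤ α / (μ * lam) :=
    (specNorm_sq_le_trace L).trans hLL
  have hKC : specNorm L ≤ Real.sqrt (α / (μ * lam)) := by
    rw [← Real.sqrt_sq (specNorm_nonneg L)]
    exact Real.sqrt_le_sqrt hKC2
  -- final arithmetic
  have hkey : Real.sqrt (α / (μ * lam)) ≤
      Real.sqrt (specNorm R * α + specNorm B ^ 2 * α ^ 2 / μ) / (Real.sqrt μ * lam) := by
    have hden : (0:ℝ) < Real.sqrt μ * lam :=
      mul_pos (Real.sqrt_pos.mpr hμpos) hlampos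
    have heq : α / (μ * lam) = (α * lam) / (Real.sqrt μ * lam) ^ 2 := by
      rw [mul_pow, Real.sq_sqrt hμpos.le,
        div_eq_div_iff (mul_pos hμpos hlampos).ne' (mul_pos hμpos (pow_pos hlampos 2)).ne']
      ring
    have hnum : α * lam ≤ specNorm R * α + specNorm B ^ 2 * α ^ 2 / μ := by
      have h1 : α * lam ≤ specNorm R * α := by
        rw [mul_comm]
        exact mul_le_mul_of_nonneg_right hlam_norm hα0
      have h2 : 0 ≤ specNorm B ^ 2 * α ^ 2 / μ :=
        div_nonneg (mul_nonneg (sq_nonneg _) (sq_nonneg _)) hμ0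
      linarith
    rw [heq, Real.sqrt_div (mul_nonneg hα0 hlam0), Real.sqrt_sq hden.le]
    exact (div_le_div_iff_of_pos_right hden).mpr (Real.sqrt_le_sqrt hnum)
  calc specNorm (K * C) ≤ Real.sqrt (α / (μ * lam)) := hKC
    _ ≤ Real.sqrt (specNorm R * α + specNorm B ^ 2 * α ^ 2 / μ) / (Real.sqrt μ * lam) := hkey
    _ ≤ _ := le_add_of_nonneg_right
        (div_nonneg (mul_nonneg (mul_nonneg (specNorm_nonneg _) (specNorm_nonneg _)) hα0)
          (mul_nonneg hμ0 hlam0))
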